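/- arXiv:hep-th/9707012 — 6 statements merged into one kernel-verified Lean document; each statement's English description precedes it below -/
import Mathlib

section
/- For the 1/(3m+1)(1,1,1,3m-2) model with m ≥ 1, the lattice points in the interior of the tetrahedron with vertices v_1 = (3m+1,-1,-1,-(3m-2)), v_2 = (0,1,0,0), v_3 = (0,0,1,0), v_4 = (0,0,0,1) in Z^4 are exactly the m points w_i = (i,0,0,-(i-1)) for 1 ≤ i ≤ m. -/
/-- Coercion of an integer lattice point to real coordinates. -/
def ic (x : Fin 4 → ℤ) : Fin 4 → ℝ := fun i => (x i : ℝ)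

/-!
Write `M = 3m + 1`. The vertices span the hyperplane `y₀ + y₁ + y₂ + y₃ = 1`, and on it `M` times
the barycentric coordinates of `y` are `y₀`, `M y₁ + y₀`, `M y₂ + y₀`, `M y₃ + (M - 3) y₀`; so a
lattice point lies in the tetrahedron iff these four integers, which sum to `M`, are nonnegative.
If `y₀ = 0` the point is one of `v₂, v₃, v₄`, and if `y₀ = M` it is `v₁`. Otherwise `0 < y₀ < M`
forces `y₁, y₂ ≥ 0`, and then `M (y₁ + y₂) ≤ M - 3 y₀ < M` forces `y₁ = y₂ = 0` and `3 y₀ ≤ M`.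
-/

theorem LinearEquiv.mem_convexHull_range_single_iff {R E ι : Type*} [Field R] [LinearOrder R]
    [IsStrictOrderedRing R] [AddCommGroup E] [Module R E] [Fintype ι] [DecidableEq ι]
    (f : (ι → R) ≃ₗ[R] E) (x : E) :
    x ∈ convexHull R (Set.range fun i ↦ f (Pi.single i 1)) ↔ f.symm x ∈ stdSimplex R ι := by
  rw [Set.range_comp' f, ← f.coe_toLinearMap, ← LinearMap.image_convexHull,
    convexHull_rangle_single_eq_stdSimplex, f.coe_toLinearMap, f.image_eq_preimage_symm]
  rfl

section Tetrahedron

variable {R : Type*}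

def tetrahedronVertices [CommRing R] (M : R) : Set (Fin 4 → R) :=
  {![M, -1, -1, -(M - 3)], ![0, 1, 0, 0], ![0, 0, 1, 0], ![0, 0, 0, 1]}

def InTetrahedron [CommRing R] [LE R] (M : R) (y : Fin 4 → R) : Prop :=
  0 ≤ y 0 ∧ 0 ≤ M * y 1 + y 0 ∧ 0 ≤ M * y 2 + y 0 ∧ 0 ≤ M * y 3 + (M - 3) * y 0 ∧
    y 0 + y 1 + y 2 + y 3 = 1

def tetrahedronEquiv [Field R] (M : R) (hM : M ≠ 0) : (Fin 4 → R) ≃ₗ[R] (Fin 4 → R) where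
  toFun w := ![M * w 0, w 1 - w 0, w 2 - w 0, w 3 - (M - 3) * w 0]
  invFun y := M⁻¹ • ![y 0, M * y 1 + y 0, M * y 2 + y 0, M * y 3 + (M - 3) * y 0]
  map_add' v w := by
    ext i
    fin_cases i <;> simp only [Matrix.cons_val_zero, Matrix.cons_val_one, Matrix.cons_val,
      Fin.reduceFinMk, Pi.add_apply] <;> ring
  map_smul' c w := by
    ext i
    fin_cases i <;> simp only [Matrix.cons_val_zero, Matrix.cons_val_one, Matrix.cons_val,
      Fin.reduceFinMk, Pi.smul_apply, smul_eq_mul, RingHom.id_apply] <;> ring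
  left_inv w := by
    ext i
    fin_cases i <;> simp only [Matrix.cons_val_zero, Matrix.cons_val_one, Matrix.cons_val,
      Fin.reduceFinMk, Pi.smul_apply, smul_eq_mul] <;> field_simp <;> ring
  right_inv y := by
    ext i
    fin_cases i <;> simp only [Matrix.cons_val_zero, Matrix.cons_val_one, Matrix.cons_val,
      Fin.reduceFinMk, Pi.smul_apply, smul_eq_mul] <;> field_simp <;> ring

theorem range_tetrahedronEquiv_single [Field R] (M : R) (hM : M ≠ 0) :
    Set.range (fun i ↦ tetrahedronEquiv M hM (Pi.single i 1)) = tetrahedronVertices M := by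
  have h (i : Fin 4) : tetrahedronEquiv M hM (Pi.single i 1) =
      ![![M, -1, -1, -(M - 3)], ![0, 1, 0, 0], ![0, 0, 1, 0], ![0, 0, 0, 1]] i := by
    ext j; fin_cases i <;> fin_cases j <;> simp [tetrahedronEquiv]
  ext y
  simp only [Set.mem_range, Fin.exists_fin_succ, Fin.exists_fin_zero, h]
  simp [tetrahedronVertices, eq_comm]

theorem mem_convexHull_tetrahedronVertices_iff [Field R] [LinearOrder R] [IsStrictOrderedRing R]
    {M : R} (hM : 0 < M) (y : Fin 4 → R) :
    y ∈ convexHull R (tetrahedronVertices M) ↔ InTetrahedron M y := by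
  rw [← range_tetrahedronEquiv_single M hM.ne', LinearEquiv.mem_convexHull_range_single_iff]
  simp only [stdSimplex, Set.mem_ofPred_eq, Fin.forall_fin_succ, Fin.sum_univ_four]
  have hsum : M⁻¹ * y 0 + M⁻¹ * (M * y 1 + y 0) + M⁻¹ * (M * y 2 + y 0) +
      M⁻¹ * (M * y 3 + (M - 3) * y 0) = y 0 + y 1 + y 2 + y 3 := by
    field_simp
    ring
  simp [tetrahedronEquiv, mul_nonneg_iff_of_pos_left (inv_pos.2 hM), InTetrahedron, hsum,
    and_assoc]

theorem inTetrahedron_intCast_iff [CommRing R] [LinearOrder R] [IsStrictOrderedRing R] (M : ℤ)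
    (x : Fin 4 → ℤ) :
    InTetrahedron (M : R) (fun i ↦ (x i : R)) ↔ InTetrahedron M x := by
  simp only [InTetrahedron]
  norm_cast

theorem image_intCast_tetrahedronVertices [CommRing R] (M : ℤ) :
    (fun x i ↦ (x i : R)) '' tetrahedronVertices M = tetrahedronVertices (M : R) := by
  have cast_vec (a b c d : ℤ) :
      (fun i ↦ ((![a, b, c, d] i : ℤ) : R)) = ![(a : R), b, c, d] := by
    ext i; fin_cases i <;> rfl
  simp only [tetrahedronVertices, Set.image_insert_eq, Set.image_singleton, cast_vec]
  push_cast
  rfl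

theorem InTetrahedron.mem_tetrahedronVertices_or {M : ℤ} (hM : 0 < M) {x : Fin 4 → ℤ}
    (hx : InTetrahedron M x) :
    x ∈ tetrahedronVertices M ∨ ∃ a, 1 ≤ a ∧ 3 * a ≤ M ∧ x = ![a, 0, 0, -(a - 1)] := by
  obtain ⟨a, b, c, d, rfl⟩ : ∃ a b c d, x = ![a, b, c, d] :=
    ⟨x 0, x 1, x 2, x 3, by ext i; fin_cases i <;> rfl⟩
  obtain ⟨h₀, h₁, h₂, h₃, hs⟩ : 0 ≤ a ∧ 0 ≤ M * b + a ∧ 0 ≤ M * c + a ∧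
      0 ≤ M * d + (M - 3) * a ∧ a + b + c + d = 1 := hx
  simp only [tetrahedronVertices, Set.mem_insert_iff, Set.mem_singleton_iff, Matrix.vecCons_inj,
    and_true, existsAndEq, true_and]
  have hsum : a + (M * b + a) + (M * c + a) + (M * d + (M - 3) * a) = M := by
    linear_combination M * hs
  rcases h₀.eq_or_lt with rfl | ha
  · have hb : 0 ≤ b := nonneg_of_mul_nonneg_right (by linarith) hM
    have hc : 0 ≤ c := nonneg_of_mul_nonneg_right (by linarith) hM
    have hd : 0 ≤ d := nonneg_of_mul_nonneg_right (by linarith) hM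
    omega
  rcases (show a ≤ M by linarith).eq_or_lt with rfl | haM
  · have hb : a * (b + 1) = 0 := by linarith
    have hc : a * (c + 1) = 0 := by linarith
    have hd : a * (d + (a - 3)) = 0 := by linarith
    simp only [mul_eq_zero, hM.ne', false_or] at hb hc hd
    omega
  · have hb : 0 < b + 1 := pos_of_mul_pos_right (a := M) (by linarith) hM.le
    have hc : 0 < c + 1 := pos_of_mul_pos_right (a := M) (by linarith) hM.le
    have hbc : b + c < 1 := lt_of_mul_lt_mul_left (a := M) (by linarith) hM.le
    obtain ⟨rfl, rfl⟩ : b = 0 ∧ c = 0 := by omega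
    right
    refine ⟨by omega, by linarith, rfl, rfl, by omega⟩

theorem inTetrahedron_and_notMem_tetrahedronVertices_iff {M : ℤ} (hM : 0 < M) (x : Fin 4 → ℤ) :
    InTetrahedron M x ∧ x ∉ tetrahedronVertices M ↔
      ∃ a, 1 ≤ a ∧ 3 * a ≤ M ∧ x = ![a, 0, 0, -(a - 1)] := by
  refine ⟨fun ⟨hx, hx_out⟩ ↦ (hx.mem_tetrahedronVertices_or hM).resolve_left hx_out, ?_⟩
  rintro ⟨a, ha, haM, rfl⟩
  refine ⟨?_, ?_⟩
  · show 0 ≤ a ∧ 0 ≤ M * 0 + a ∧ 0 ≤ M * 0 + a ∧ 0 ≤ M * -(a - 1) + (M - 3) * a ∧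
      a + 0 + 0 + -(a - 1) = 1
    refine ⟨by omega, by omega, by omega, by linarith, by ring⟩
  · simp only [tetrahedronVertices, Set.mem_insert_iff, Set.mem_singleton_iff,
      Matrix.vecCons_inj, and_true]
    omega

theorem ic_mem_convexHull_tetrahedronVertices_iff {M : ℤ} (hM : 0 < M) (x : Fin 4 → ℤ) :
    ic x ∈ convexHull ℝ (ic '' tetrahedronVertices M) ↔ InTetrahedron M x := by
  rw [show ic = fun x i ↦ (x i : ℝ) from rfl, image_intCast_tetrahedronVertices,
    mem_convexHull_tetrahedronVertices_iff (by exact_mod_cast hM), inTetrahedron_intCast_iff]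

end Tetrahedron

theorem lattice_points_of_tetrahedron_A_series (m : ℤ) (hm : 1 ≤ m)
    (v₁ v₂ v₃ v₄ : Fin 4 → ℤ)
    (hv₁ : v₁ = ![3 * m + 1, -1, -1, -(3 * m - 2)])
    (hv₂ : v₂ = ![0, 1, 0, 0]) (hv₃ : v₃ = ![0, 0, 1, 0]) (hv₄ : v₄ = ![0, 0, 0, 1])
    (w : ℤ → (Fin 4 → ℤ)) (hw : ∀ i, w i = ![i, 0, 0, -(i - 1)]) :
    ∀ x : Fin 4 → ℤ,
      (ic x ∈ convexHull ℝ ({ic v₁, ic v₂, ic v₃, ic v₄} : Set (Fin 4 → ℝ)) ∧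
        x ≠ v₁ ∧ x ≠ v₂ ∧ x ≠ v₃ ∧ x ≠ v₄) ↔
      ∃ i : ℤ, 1 ≤ i ∧ i ≤ m ∧ x = w i := by
  intro x
  rw [show 3 * m - 2 = 3 * m + 1 - 3 by ring] at hv₁
  subst hv₁ hv₂ hv₃ hv₄
  have hM : 0 < 3 * m + 1 := by omega
  have hverts : ({ic ![3 * m + 1, -1, -1, -(3 * m + 1 - 3)], ic ![0, 1, 0, 0], ic ![0, 0, 1, 0],
      ic ![0, 0, 0, 1]} : Set (Fin 4 → ℝ)) = ic '' tetrahedronVertices (3 * m + 1) := by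
    simp only [tetrahedronVertices, Set.image_insert_eq, Set.image_singleton]
  have hne : x ∉ tetrahedronVertices (3 * m + 1) ↔ x ≠ ![3 * m + 1, -1, -1, -(3 * m + 1 - 3)] ∧
      x ≠ ![0, 1, 0, 0] ∧ x ≠ ![0, 0, 1, 0] ∧ x ≠ ![0, 0, 0, 1] := by
    simp only [tetrahedronVertices, Set.mem_insert_iff, Set.mem_singleton_iff, not_or]
  rw [hverts, ic_mem_convexHull_tetrahedronVertices_iff hM, ← hne,
    inTetrahedron_and_notMem_tetrahedronVertices_iff hM]
  simp only [hw]
  exact exists_congr fun a ↦ and_congr_right fun _ ↦ and_congr_left fun _ ↦ by omega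
end

section
/- For the 1/(4m)(1,1,2m-1,2m-1) model with m ≥ 1, the tetrahedron with vertices v_1 = (4m,-1,-(2m-1),-(2m-1)), v_2 = (0,1,0,0), v_3 = (0,0,1,0), v_4 = (0,0,0,1) contains the lattice point w_0 = (1,0,0,0), and the triangle with vertices w_0, v_1, v_2 contains the m-1 lattice points w_i = (2i+1,0,-i,-i) for 1 ≤ i ≤ m-1 in its interior. -/
theorem lattice_points_of_tetrahedron_second_A_series (m : ℤ) (hm : 1 ≤ m)
    (v₁ v₂ v₃ v₄ w₀ : Fin 4 → ℤ)
    (hv₁ : v₁ = ![4 * m, -1, -(2 * m - 1), -(2 * m - 1)])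
    (hv₂ : v₂ = ![0, 1, 0, 0]) (hv₃ : v₃ = ![0, 0, 1, 0]) (hv₄ : v₄ = ![0, 0, 0, 1])
    (hw₀ : w₀ = ![1, 0, 0, 0])
    (w : ℤ → (Fin 4 → ℤ)) (hw : ∀ i, w i = ![2 * i + 1, 0, -i, -i]) :
    ic w₀ ∈ convexHull ℝ ({ic v₁, ic v₂, ic v₃, ic v₄} : Set (Fin 4 → ℝ)) ∧
    ∀ i : ℤ, 1 ≤ i → i ≤ m - 1 →
      ∃ α β γ : ℝ, 0 < α ∧ 0 < β ∧ 0 < γ ∧ α + β + γ = 1 ∧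
        ic (w i) = α • ic w₀ + β • ic v₁ + γ • ic v₂ := by
  have hM : (1 : ℝ) ≤ (m : ℝ) := by exact_mod_cast hm
  have hM0 : (0 : ℝ) < (m : ℝ) := lt_of_lt_of_le zero_lt_one hM
  constructor
  · -- weights
    set M : ℝ := (m : ℝ)
    have h4M : (4 * M) ≠ 0 := by positivity
    have key : ic w₀ = ∑ j : Fin 4,
        (![1/(4*M), 1/(4*M), (2*M-1)/(4*M), (2*M-1)/(4*M)] j) •
        (![ic v₁, ic v₂, ic v₃, ic v₄] j) := by
      funext k
      simp only [Fin.sum_univ_four]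
      fin_cases k <;>
        simp [ic, hv₁, hv₂, hv₃, hv₄, hw₀] <;> field_simp <;> ring
    rw [key]
    apply (convex_convexHull ℝ _).sum_mem
    · intro j _
      fin_cases j <;> simp <;>
        first
        | linarith
        | (apply div_nonneg <;> linarith)
    · simp [Fin.sum_univ_four]
      field_simp
      ring
    · intro j _
      apply subset_convexHull
      fin_cases j <;> simp
  · intro i hi1 hi2
    have hi1' : (1 : ℝ) ≤ (i : ℝ) := by exact_mod_cast hi1
    have hi2' : (i : ℝ) ≤ (m : ℝ) - 1 := by
      have : (i : ℝ) ≤ ((m - 1 : ℤ) : ℝ) := by exact_mod_cast hi2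
      simpa using this
    have hd : (0 : ℝ) < 2 * (m : ℝ) - 1 := by linarith
    have hd' : (2 * (m : ℝ) - 1) ≠ 0 := ne_of_gt hd
    refine ⟨(2*(m:ℝ) - 1 - 2*(i:ℝ)) / (2*(m:ℝ) - 1), (i:ℝ)/(2*(m:ℝ)-1),
      (i:ℝ)/(2*(m:ℝ)-1), ?_, ?_, ?_, ?_, ?_⟩
    · apply div_pos _ hd; linarith
    · apply div_pos _ hd; linarith
    · apply div_pos _ hd; linarith
    · field_simp
      ring
    · funext k
      fin_cases k <;>
        simp [ic, hw, hv₁, hv₂, hw₀] <;> field_simp <;> ring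
end

section
/- For n = 3m+1 and weights (a_1,a_2,a_3,a_4) = (1,1,1,3m-2) with m ≥ 1, the number of k in {1,...,n-1} with age(k) = 1 is m, i.e., h^{1,1} = m, and likewise h^{2,2} = m and h^{3,3} = m. -/
open scoped Classical

noncomputable def age (n : ℕ) (a : Fin 4 → ℤ) (k : ℕ) : ℝ :=
  ∑ μ : Fin 4, Int.fract ((k : ℝ) * (a μ : ℝ) / (n : ℝ))

noncomputable def hpp (n : ℕ) (a : Fin 4 → ℤ) (p : ℕ) : ℕ :=
  ((Finset.Icc 1 (n - 1)).filter (fun k => age n a k = p)).card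

/-!
Since `3m - 2 ≡ -3 (mod n)`, for `0 ≤ k < n` the three unit weights contribute `3k/n` and the last
one `fract (-3k/n) = ⌈3k/n⌉ - 3k/n`, so `age k = ⌈3k/n⌉`. For `n = 3m + 1` this ceiling equals `p`
exactly on the block `(p - 1)m < k ≤ pm`, which has `m` elements for `p = 1, 2, 3`.
-/

theorem age_one_one_one_eq_ceil {n k : ℕ} {a : ℤ} (ha : (n : ℤ) ∣ a + 3) (hk : k < n) :
    age n ![1, 1, 1, a] k = ⌈(3 * k : ℝ) / n⌉ := by
  have hn : (0 : ℝ) < n := by exact_mod_cast k.zero_le.trans_lt hk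
  obtain ⟨c, hc⟩ := ha
  have h_unit : Int.fract ((k : ℝ) * (1 : ℤ) / n) = k / n := by
    rw [Int.cast_one, mul_one, Int.fract_eq_self]
    exact ⟨by positivity, (div_lt_one hn).2 (by exact_mod_cast hk)⟩
  have h_last : Int.fract ((k : ℝ) * a / n) = ⌈(3 * k : ℝ) / n⌉ - 3 * k / n := by
    have : (k : ℝ) * a / n = -(3 * k / n) + ((k * c : ℤ) : ℝ) := by
      rw [eq_sub_of_add_eq hc]; push_cast; field_simp; ring
    rw [this, Int.fract_add_intCast, Int.fract, Int.floor_neg, Int.cast_neg]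
    ring
  simp only [age, Fin.sum_univ_four, Matrix.cons_val_zero, Matrix.cons_val_one,
    Matrix.cons_val_two, Matrix.cons_val_three, Matrix.head_cons, Matrix.tail_cons,
    h_unit, h_last]
  ring

theorem ceil_three_mul_div_eq_iff {m k p : ℕ} (hk : k ≤ 3 * m) (hp : 1 ≤ p) (hp3 : p ≤ 3) :
    ⌈(3 * k : ℝ) / (3 * m + 1 : ℕ)⌉ = p ↔ (p - 1) * m < k ∧ k ≤ p * m := by
  have hn : (0 : ℝ) < (3 * m + 1 : ℕ) := by positivity
  rw [Int.ceil_eq_iff, lt_div_iff₀ hn, div_le_iff₀ hn]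
  norm_cast
  interval_cases p <;> omega

theorem hpp_A_series {m p : ℕ} (hp : 1 ≤ p) (hp3 : p ≤ 3) :
    hpp (3 * m + 1) ![1, 1, 1, 3 * (m : ℤ) - 2] p = m := by
  have h_dvd : ((3 * m + 1 : ℕ) : ℤ) ∣ 3 * (m : ℤ) - 2 + 3 := ⟨1, by push_cast; ring⟩
  have h_age {k : ℕ} (hk : k ≤ 3 * m) :
      age (3 * m + 1) ![1, 1, 1, 3 * (m : ℤ) - 2] k = p ↔ (p - 1) * m < k ∧ k ≤ p * m := by
    rw [age_one_one_one_eq_ceil h_dvd (by omega), ← ceil_three_mul_div_eq_iff hk hp hp3]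
    norm_cast
  have h_filter : (Finset.Icc 1 (3 * m + 1 - 1)).filter
      (fun k => age (3 * m + 1) ![1, 1, 1, 3 * (m : ℤ) - 2] k = p)
        = Finset.Ioc ((p - 1) * m) (p * m) := by
    ext k
    simp only [Finset.mem_filter, Finset.mem_Icc, Finset.mem_Ioc]
    constructor
    · rintro ⟨⟨-, hk⟩, h_eq⟩
      exact (h_age (by omega)).1 h_eq
    · rintro ⟨hk₁, hk₂⟩
      have hk : k ≤ 3 * m := hk₂.trans (Nat.mul_le_mul_right m hp3)
      exact ⟨⟨by omega, by omega⟩, (h_age hk).2 ⟨hk₁, hk₂⟩⟩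
  rw [hpp, h_filter, Nat.card_Ioc, ← Nat.sub_mul, Nat.sub_sub_self hp, one_mul]

theorem hodge_numbers_A_series_general (m : ℕ) :
    hpp (3 * m + 1) ![1, 1, 1, 3 * (m : ℤ) - 2] 1 = m ∧
    hpp (3 * m + 1) ![1, 1, 1, 3 * (m : ℤ) - 2] 2 = m ∧
    hpp (3 * m + 1) ![1, 1, 1, 3 * (m : ℤ) - 2] 3 = m :=
  ⟨hpp_A_series le_rfl (by norm_num), hpp_A_series (by norm_num) (by norm_num),
    hpp_A_series (by norm_num) le_rfl⟩

theorem hodge_numbers_A_series (m : ℕ) (hm : 1 ≤ m) :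
    hpp (3 * m + 1) ![1, 1, 1, 3 * (m : ℤ) - 2] 1 = m ∧
    hpp (3 * m + 1) ![1, 1, 1, 3 * (m : ℤ) - 2] 2 = m ∧
    hpp (3 * m + 1) ![1, 1, 1, 3 * (m : ℤ) - 2] 3 = m :=
  hodge_numbers_A_series_general m
end

section
/- For n = 4m and weights (a_1,a_2,a_3,a_4) = (1,1,2m-1,2m-1) with m ≥ 1, h^{1,1} = h^{3,3} = m and h^{2,2} = 2m-1, where h^{p,p} counts k in {1,...,n-1} with age(k) = p. -/
open scoped Classical

lemma age_formula (m k : ℕ) (hm : 1 ≤ m) (q r : ℤ) (hr0 : 0 ≤ r) (hr : r < 4 * m)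
    (hk0 : 1 ≤ k) (hk : k < 4 * m)
    (h : (k : ℤ) * (2 * m - 1) = q * (4 * m) + r) :
    age (4 * m) ![1, 1, 2 * (m : ℤ) - 1, 2 * (m : ℤ) - 1] k
      = (2 * k + 2 * r) / (4 * m) := by
  have hm' : (0:ℝ) < 4 * m := by positivity
  have hfr1 : Int.fract ((k : ℝ) * ((1:ℤ) : ℝ) / ((4 * m : ℕ) : ℝ)) = k / (4 * m) := by
    push_cast
    rw [mul_one, Int.fract_eq_self]
    constructor
    · positivity
    · rw [div_lt_one hm']
      exact_mod_cast hk
  have harg : (k : ℝ) * ((2 * (m:ℤ) - 1 : ℤ) : ℝ) / ((4 * m : ℕ) : ℝ)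
      = (q : ℝ) + (r : ℝ) / (4 * m) := by
    have := congrArg (fun z : ℤ => (z : ℝ)) h
    push_cast at this ⊢
    field_simp
    linarith
  have hfr2 : Int.fract ((k : ℝ) * ((2 * (m:ℤ) - 1 : ℤ) : ℝ) / ((4 * m : ℕ) : ℝ))
      = (r : ℝ) / (4 * m) := by
    rw [harg, Int.fract_intCast_add, Int.fract_eq_self]
    constructor
    · positivity
    · rw [div_lt_one hm']
      exact_mod_cast hr
  unfold age
  rw [Fin.sum_univ_four]
  simp only [Matrix.cons_val_zero, Matrix.cons_val_one, Matrix.head_cons,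
    Matrix.cons_val_two, Matrix.tail_cons, Matrix.cons_val_three]
  rw [hfr1, hfr2]
  push_cast
  ring

lemma age_cases (m : ℕ) (hm : 1 ≤ m) (k : ℕ) (hk0 : 1 ≤ k) (hk : k ≤ 4 * m - 1) :
    (k % 2 = 1 ∧ k < 2 * m ∧ age (4 * m) ![1, 1, 2 * (m : ℤ) - 1, 2 * (m : ℤ) - 1] k = 1) ∨
    (k % 2 = 0 ∧ age (4 * m) ![1, 1, 2 * (m : ℤ) - 1, 2 * (m : ℤ) - 1] k = 2) ∨
    (k % 2 = 1 ∧ 2 * m < k ∧ age (4 * m) ![1, 1, 2 * (m : ℤ) - 1, 2 * (m : ℤ) - 1] k = 3) := by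
  have hm' : (0:ℝ) < 4 * m := by positivity
  have hk4 : k < 4 * m := by omega
  rcases Nat.even_or_odd k with he | ho
  · -- even case
    obtain ⟨j, hj⟩ := he
    refine Or.inr (Or.inl ⟨by omega, ?_⟩)
    have hj1 : 1 ≤ j := by omega
    have hkj : (k : ℤ) = 2 * j := by push_cast [hj]; ring
    have hkr : (k:ℝ) = 2 * j := by push_cast [hj]; ring
    have hjk : 2 * j = k := by omega
    have hj4 : j ≤ 2 * m := by omega
    rw [age_formula m k hm ((j:ℤ) - 1) (4 * (m:ℤ) - 2 * j) (by push_cast; omega)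
      (by push_cast; omega) hk0 hk4 (by linear_combination (2 * (m:ℤ) - 1) * hkj)]
    rw [div_eq_iff (ne_of_gt hm')]
    push_cast
    linear_combination (2:ℝ) * hkr
  · obtain ⟨j, hj⟩ := ho
    rcases lt_or_gt_of_ne (show k ≠ 2 * m by omega) with hlt | hgt
    · refine Or.inl ⟨by omega, hlt, ?_⟩
      have hkj : (k : ℤ) = 2 * j + 1 := by push_cast [hj]; ring
      rw [age_formula m k hm j (2 * m - k) (by omega) (by omega) hk0 hk4
        (by linear_combination (2 * (m:ℤ)) * hkj)]
      have hkr : (k:ℝ) = 2 * j + 1 := by push_cast [hj]; ring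
      rw [div_eq_iff (ne_of_gt hm')]
      push_cast
      ring
    · refine Or.inr (Or.inr ⟨by omega, hgt, ?_⟩)
      have hkj : (k : ℤ) = 2 * j + 1 := by push_cast [hj]; ring
      have hkr : (k:ℝ) = 2 * j + 1 := by push_cast [hj]; ring
      rw [age_formula m k hm ((j:ℤ) - 1) (6 * (m:ℤ) - 2 * j - 1) (by omega) (by omega)
        hk0 hk4 (by linear_combination (2 * (m:ℤ) - 1) * hkj)]
      rw [div_eq_iff (ne_of_gt hm')]
      push_cast
      linear_combination (2:ℝ) * hkr

theorem hodge_numbers_second_A_series (m : ℕ) (hm : 1 ≤ m) :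
    hpp (4 * m) ![1, 1, 2 * (m : ℤ) - 1, 2 * (m : ℤ) - 1] 1 = m ∧
    hpp (4 * m) ![1, 1, 2 * (m : ℤ) - 1, 2 * (m : ℤ) - 1] 2 = 2 * m - 1 ∧
    hpp (4 * m) ![1, 1, 2 * (m : ℤ) - 1, 2 * (m : ℤ) - 1] 3 = m := by
  refine ⟨?_, ?_, ?_⟩
  · unfold hpp
    have hset : (Finset.Icc 1 (4 * m - 1)).filter
        (fun k => age (4 * m) ![1, 1, 2 * (m : ℤ) - 1, 2 * (m : ℤ) - 1] k = ((1:ℕ):ℝ))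
        = (Finset.range m).image (fun j => 2 * j + 1) := by
      ext k
      simp only [Finset.mem_filter, Finset.mem_Icc, Finset.mem_image, Finset.mem_range]
      constructor
      · rintro ⟨⟨h1, h2⟩, hage⟩
        rcases age_cases m hm k h1 h2 with ⟨ho, hlt, hv⟩ | ⟨he, hv⟩ | ⟨ho, hgt, hv⟩
        · exact ⟨k / 2, by omega, by omega⟩
        · rw [hv] at hage; norm_num at hage
        · rw [hv] at hage; norm_num at hage
      · rintro ⟨j, hj, rfl⟩
        have h1 : 1 ≤ 2 * j + 1 := by omega
        have h2 : 2 * j + 1 ≤ 4 * m - 1 := by omega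
        refine ⟨⟨h1, h2⟩, ?_⟩
        rcases age_cases m hm (2 * j + 1) h1 h2 with ⟨_, _, hv⟩ | ⟨he, _⟩ | ⟨_, hgt, _⟩
        · rw [hv]; norm_num
        · omega
        · omega
    rw [hset, Finset.card_image_of_injective _ (fun a b hab => by omega), Finset.card_range]
  · unfold hpp
    have hset : (Finset.Icc 1 (4 * m - 1)).filter
        (fun k => age (4 * m) ![1, 1, 2 * (m : ℤ) - 1, 2 * (m : ℤ) - 1] k = ((2:ℕ):ℝ))
        = (Finset.range (2 * m - 1)).image (fun j => 2 * j + 2) := by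
      ext k
      simp only [Finset.mem_filter, Finset.mem_Icc, Finset.mem_image, Finset.mem_range]
      constructor
      · rintro ⟨⟨h1, h2⟩, hage⟩
        rcases age_cases m hm k h1 h2 with ⟨ho, hlt, hv⟩ | ⟨he, hv⟩ | ⟨ho, hgt, hv⟩
        · rw [hv] at hage; norm_num at hage
        · exact ⟨k / 2 - 1, by omega, by omega⟩
        · rw [hv] at hage; norm_num at hage
      · rintro ⟨j, hj, rfl⟩
        have h1 : 1 ≤ 2 * j + 2 := by omega
        have h2 : 2 * j + 2 ≤ 4 * m - 1 := by omega
        refine ⟨⟨h1, h2⟩, ?_⟩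
        rcases age_cases m hm (2 * j + 2) h1 h2 with ⟨ho, _, _⟩ | ⟨_, hv⟩ | ⟨ho, _, _⟩
        · omega
        · rw [hv]; norm_num
        · omega
    rw [hset, Finset.card_image_of_injective _ (fun a b hab => by omega), Finset.card_range]
  · unfold hpp
    have hset : (Finset.Icc 1 (4 * m - 1)).filter
        (fun k => age (4 * m) ![1, 1, 2 * (m : ℤ) - 1, 2 * (m : ℤ) - 1] k = ((3:ℕ):ℝ))
        = (Finset.range m).image (fun j => 2 * m + 2 * j + 1) := by
      ext k
      simp only [Finset.mem_filter, Finset.mem_Icc, Finset.mem_image, Finset.mem_range]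
      constructor
      · rintro ⟨⟨h1, h2⟩, hage⟩
        rcases age_cases m hm k h1 h2 with ⟨ho, hlt, hv⟩ | ⟨he, hv⟩ | ⟨ho, hgt, hv⟩
        · rw [hv] at hage; norm_num at hage
        · rw [hv] at hage; norm_num at hage
        · exact ⟨(k - 2 * m - 1) / 2, by omega, by omega⟩
      · rintro ⟨j, hj, rfl⟩
        have h1 : 1 ≤ 2 * m + 2 * j + 1 := by omega
        have h2 : 2 * m + 2 * j + 1 ≤ 4 * m - 1 := by omega
        refine ⟨⟨h1, h2⟩, ?_⟩
        rcases age_cases m hm (2 * m + 2 * j + 1) h1 h2 with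
          ⟨_, hlt, _⟩ | ⟨he, _⟩ | ⟨_, _, hv⟩
        · omega
        · omega
        · rw [hv]; norm_num
    rw [hset, Finset.card_image_of_injective _ (fun a b hab => by omega), Finset.card_range]
end

section
/- With the setup above, for 1 ≤ k ≤ n-1: sign(b_k) = +1 if age(k) = 2 and sign(b_k) = -1 if age(k) ∈ {1,3}. Consequently, as a real quadratic form on the hyperplane orthogonal to the all-ones vector, C_S has signature (h^{2,2}, h^{1,1} + h^{3,3}) and rank n-1, provided b_k ≠ 0 for all 1 ≤ k ≤ n-1. -/
open scoped Classical

/-- The eigenvalue `b_k = (-1)^{age(k)} · 8 · Π_μ sin(π {k a_μ/n})`;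
since `age(k)` is an integer, `(-1)^{age(k)} = cos(π · age(k))`. -/
noncomputable def bR (n : ℕ) (a : Fin 4 → ℤ) (k : ℕ) : ℝ :=
  Real.cos (Real.pi * age n a k) * 8 *
    ∏ μ : Fin 4, Real.sin (Real.pi * Int.fract ((k : ℝ) * (a μ : ℝ) / (n : ℝ)))

/-!
Since `gcd(a_μ, n) = 1` and `0 < k < n`, every `{k a_μ / n}` lies in `(0, 1)`, so every sine
factor of `b_k` is positive and `b_k` has the sign of `(-1)^{age(k)}`. As `n ∣ Σ a_μ`, the age
is an integer, and as a sum of four numbers in `(0, 1)` it is `1`, `2` or `3`. The signs, and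
hence the counts, follow.
-/

theorem Int.fract_mul_div_pos_of_gcd_eq_one {a : ℤ} {n k : ℕ} (ha : a.gcd n = 1)
    (hk0 : 0 < k) (hkn : k < n) : 0 < Int.fract ((k : ℝ) * a / n) := by
  have hndvd : ¬ (n : ℤ) ∣ k * a := fun h => by
    have hk : (n : ℤ) ∣ k :=
      (Int.isCoprime_iff_gcd_eq_one.2 (by rwa [Int.gcd_comm])).dvd_of_dvd_mul_right h
    have := Int.le_of_dvd (by exact_mod_cast hk0) hk
    omega
  have hmod : 0 < (k * a : ℤ) % n :=
    (Int.emod_nonneg _ (by omega)).lt_of_ne fun h => hndvd (Int.dvd_of_emod_eq_zero h.symm)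
  rw [show (k : ℝ) * a = ((k * a : ℤ) : ℝ) by push_cast; rfl,
    Int.fract_div_intCast_eq_div_intCast_mod]
  exact div_pos (by exact_mod_cast hmod) (by exact_mod_cast hk0.trans hkn)

theorem sum_fract_eq_intCast_sub_sum_floor {ι : Type*} [Fintype ι] {x : ι → ℝ} {m : ℤ}
    (h : ∑ i, x i = m) : ∑ i, Int.fract (x i) = ((m - ∑ i, ⌊x i⌋ : ℤ) : ℝ) := by
  simp only [Int.fract, Finset.sum_sub_distrib, h]
  push_cast
  rfl

theorem Real.cos_pi_mul_ofNat (m : ℕ) [m.AtLeastTwo] :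
    Real.cos (Real.pi * ofNat(m)) = (-1) ^ (ofNat(m) : ℕ) := by
  rw [mul_comm]
  exact Real.cos_nat_mul_pi m

section
variable {n : ℕ} {a : Fin 4 → ℤ} {k : ℕ}

theorem fract_pos_of_mem_Icc (hcop : ∀ μ, Int.gcd (a μ) n = 1) (hk : k ∈ Finset.Icc 1 (n - 1))
    (μ : Fin 4) : 0 < Int.fract ((k : ℝ) * a μ / n) := by
  obtain ⟨hk0, hkn⟩ := Finset.mem_Icc.1 hk
  exact Int.fract_mul_div_pos_of_gcd_eq_one (hcop μ) hk0 (by omega)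

theorem exists_age_eq_intCast (hsum : (n : ℤ) ∣ ∑ μ, a μ) (hn : n ≠ 0) :
    ∃ m : ℤ, age n a k = m := by
  obtain ⟨t, ht⟩ := hsum
  refine ⟨_, sum_fract_eq_intCast_sub_sum_floor (m := k * t) ?_⟩
  rw [← Finset.sum_div, ← Finset.mul_sum, ← Int.cast_sum, ht]
  push_cast
  field_simp

theorem age_eq_one_or_two_or_three (hcop : ∀ μ, Int.gcd (a μ) n = 1)
    (hsum : (n : ℤ) ∣ ∑ μ, a μ) (hk : k ∈ Finset.Icc 1 (n - 1)) :
    age n a k = 1 ∨ age n a k = 2 ∨ age n a k = 3 := by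
  obtain ⟨m, hm⟩ := exists_age_eq_intCast (k := k) hsum (by grind)
  have hpos : 0 < age n a k :=
    Finset.sum_pos (fun μ _ => fract_pos_of_mem_Icc hcop hk μ) Finset.univ_nonempty
  have hlt : age n a k < 4 := by
    calc age n a k < ∑ _μ : Fin 4, (1 : ℝ) :=
          Finset.sum_lt_sum_of_nonempty Finset.univ_nonempty fun μ _ => Int.fract_lt_one _
      _ = 4 := by simp
  rw [hm] at hpos hlt ⊢
  have : 0 < m := by exact_mod_cast hpos
  have : m < 4 := by exact_mod_cast hlt
  interval_cases m <;> norm_num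

theorem prod_sin_pos (hcop : ∀ μ, Int.gcd (a μ) n = 1) (hk : k ∈ Finset.Icc 1 (n - 1)) :
    0 < ∏ μ : Fin 4, Real.sin (Real.pi * Int.fract ((k : ℝ) * a μ / n)) :=
  Finset.prod_pos fun μ _ => Real.sin_pos_of_pos_of_lt_pi
    (mul_pos Real.pi_pos (fract_pos_of_mem_Icc hcop hk μ))
    (mul_lt_of_lt_one_right Real.pi_pos (Int.fract_lt_one _))

theorem bR_pos_iff (hcop : ∀ μ, Int.gcd (a μ) n = 1) (hsum : (n : ℤ) ∣ ∑ μ, a μ)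
    (hk : k ∈ Finset.Icc 1 (n - 1)) : 0 < bR n a k ↔ age n a k = 2 := by
  have hP := prod_sin_pos hcop hk
  rcases age_eq_one_or_two_or_three hcop hsum hk with h | h | h <;>
    norm_num [bR, h, Real.cos_pi_mul_ofNat, hP, hP.le]

theorem bR_neg_iff (hcop : ∀ μ, Int.gcd (a μ) n = 1) (hsum : (n : ℤ) ∣ ∑ μ, a μ)
    (hk : k ∈ Finset.Icc 1 (n - 1)) : bR n a k < 0 ↔ age n a k = 1 ∨ age n a k = 3 := by
  have hP := prod_sin_pos hcop hk
  rcases age_eq_one_or_two_or_three hcop hsum hk with h | h | h <;>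
    norm_num [bR, h, Real.cos_pi_mul_ofNat, hP, hP.le]

end

theorem eigenvalue_signs_and_signature_general (n : ℕ) (a : Fin 4 → ℤ)
    (hcop : ∀ μ, Int.gcd (a μ) n = 1)
    (hsum : (n : ℤ) ∣ ∑ μ : Fin 4, a μ) :
    (∀ k ∈ Finset.Icc 1 (n - 1),
      (age n a k = 2 → 0 < bR n a k) ∧
      (age n a k = 1 ∨ age n a k = 3 → bR n a k < 0)) ∧
    ((∀ k ∈ Finset.Icc 1 (n - 1), bR n a k ≠ 0) →
      ((Finset.Icc 1 (n - 1)).filter (fun k => 0 < bR n a k)).card = hpp n a 2 ∧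
      ((Finset.Icc 1 (n - 1)).filter (fun k => bR n a k < 0)).card =
        hpp n a 1 + hpp n a 3) := by
  have hpos k (hk : k ∈ Finset.Icc 1 (n - 1)) := bR_pos_iff hcop hsum hk
  have hneg k (hk : k ∈ Finset.Icc 1 (n - 1)) := bR_neg_iff hcop hsum hk
  refine ⟨fun k hk => ⟨(hpos k hk).2, (hneg k hk).2⟩, fun _ => ⟨?_, ?_⟩⟩
  · rw [hpp, Finset.filter_congr hpos]
    norm_num
  · have hdisj : Disjoint ((Finset.Icc 1 (n - 1)).filter fun k => age n a k = (1 : ℕ))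
        ((Finset.Icc 1 (n - 1)).filter fun k => age n a k = (3 : ℕ)) :=
      Finset.disjoint_filter.2 fun k _ h1 h3 => by norm_num [h1] at h3
    rw [hpp, hpp, ← Finset.card_union_of_disjoint hdisj, ← Finset.filter_or,
      Finset.filter_congr hneg]
    norm_num

/-- The sign of the eigenvalue `b_k` is `+1` for age 2 and `-1` for age 1 or 3;
consequently the anomaly form `C_S`, restricted to the hyperplane orthogonal to
the all-ones vector (where its eigenvalues are exactly `b_1, …, b_{n-1}`), has
signature `(h^{2,2}, h^{1,1} + h^{3,3})` and rank `n - 1`, provided all these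
eigenvalues are nonzero. -/
theorem eigenvalue_signs_and_signature (n : ℕ) (hn : 2 ≤ n) (a : Fin 4 → ℤ)
    (hcop : ∀ μ, Int.gcd (a μ) n = 1)
    (hsum : (n : ℤ) ∣ ∑ μ : Fin 4, a μ) :
    (∀ k ∈ Finset.Icc 1 (n - 1),
      (age n a k = 2 → 0 < bR n a k) ∧
      (age n a k = 1 ∨ age n a k = 3 → bR n a k < 0)) ∧
    ((∀ k ∈ Finset.Icc 1 (n - 1), bR n a k ≠ 0) →
      ((Finset.Icc 1 (n - 1)).filter (fun k => 0 < bR n a k)).card = hpp n a 2 ∧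
      ((Finset.Icc 1 (n - 1)).filter (fun k => bR n a k < 0)).card =
        hpp n a 1 + hpp n a 3) :=
  eigenvalue_signs_and_signature_general n a hcop hsum
end

section
/- For the 1/4(1,1,1,1) model: the tetrahedron with vertices (4,-1,-1,-1), (0,1,0,0), (0,0,1,0), (0,0,0,1) in Z^4 contains exactly one lattice point other than its vertices, namely (1,0,0,0), and this point is given by the age formula w_1 = Σ_μ frac(a_μ/4)·v_μ with all a_μ = 1. -/
set_option maxHeartbeats 1600000 in
theorem lattice_point_quarter_1111 (v₁ v₂ v₃ v₄ w : Fin 4 → ℤ)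
    (hv₁ : v₁ = ![4, -1, -1, -1]) (hv₂ : v₂ = ![0, 1, 0, 0])
    (hv₃ : v₃ = ![0, 0, 1, 0]) (hv₄ : v₄ = ![0, 0, 0, 1])
    (hw : w = ![1, 0, 0, 0]) :
    (∀ x : Fin 4 → ℤ,
      (ic x ∈ convexHull ℝ ({ic v₁, ic v₂, ic v₃, ic v₄} : Set (Fin 4 → ℝ)) ∧
        x ≠ v₁ ∧ x ≠ v₂ ∧ x ≠ v₃ ∧ x ≠ v₄) ↔ x = w) ∧
    ic w = (1 / 4 : ℝ) • (ic v₁ + ic v₂ + ic v₃ + ic v₄) := by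
  subst hv₁ hv₂ hv₃ hv₄ hw
  have hsnd : ic ![1, 0, 0, 0] =
      (1 / 4 : ℝ) • (ic ![4, -1, -1, -1] + ic ![0, 1, 0, 0] + ic ![0, 0, 1, 0] + ic ![0, 0, 0, 1]) := by
    funext i
    fin_cases i <;> simp [ic] <;> norm_num
  refine ⟨fun x => ⟨fun ⟨hmem, h1, h2, h3, h4⟩ => ?_, fun hx => ?_⟩, hsnd⟩
  · -- forward
    set S : Set (Fin 4 → ℝ) := {p | 0 ≤ p 0 ∧ 0 ≤ 4 * p 1 + p 0 ∧ 0 ≤ 4 * p 2 + p 0 ∧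
        0 ≤ 4 * p 3 + p 0 ∧ p 0 + p 1 + p 2 + p 3 = 1} with hS
    have hconv : Convex ℝ S := by
      intro p hp q hq a b ha hb hab
      obtain ⟨p1, p2, p3, p4, p5⟩ := hp
      obtain ⟨q1, q2, q3, q4, q5⟩ := hq
      refine ⟨?_, ?_, ?_, ?_, ?_⟩ <;>
        simp only [Pi.add_apply, Pi.smul_apply, smul_eq_mul] <;> nlinarith
    have hsub : ({ic ![4, -1, -1, -1], ic ![0, 1, 0, 0], ic ![0, 0, 1, 0],
        ic ![0, 0, 0, 1]} : Set (Fin 4 → ℝ)) ⊆ S := by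
      intro p hp
      rcases hp with h | h | h | h <;> subst h <;>
        refine ⟨?_, ?_, ?_, ?_, ?_⟩ <;> simp [ic] <;> norm_num
    have hxS : ic x ∈ S := convexHull_min hsub hconv hmem
    obtain ⟨a1, a2, a3, a4, a5⟩ := hxS
    simp only [ic] at a1 a2 a3 a4 a5
    have b1 : (0 : ℤ) ≤ x 0 := by exact_mod_cast a1
    have b2 : (0 : ℤ) ≤ 4 * x 1 + x 0 := by exact_mod_cast a2
    have b3 : (0 : ℤ) ≤ 4 * x 2 + x 0 := by exact_mod_cast a3
    have b4 : (0 : ℤ) ≤ 4 * x 3 + x 0 := by exact_mod_cast a4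
    have b5 : x 0 + x 1 + x 2 + x 3 = 1 := by exact_mod_cast a5
    have hcases : (x 0 = 4 ∧ x 1 = -1 ∧ x 2 = -1 ∧ x 3 = -1) ∨
        (x 0 = 0 ∧ x 1 = 1 ∧ x 2 = 0 ∧ x 3 = 0) ∨
        (x 0 = 0 ∧ x 1 = 0 ∧ x 2 = 1 ∧ x 3 = 0) ∨
        (x 0 = 0 ∧ x 1 = 0 ∧ x 2 = 0 ∧ x 3 = 1) ∨
        (x 0 = 1 ∧ x 1 = 0 ∧ x 2 = 0 ∧ x 3 = 0) := by omega
    rcases hcases with ⟨c0, c1, c2, c3⟩ | ⟨c0, c1, c2, c3⟩ | ⟨c0, c1, c2, c3⟩ |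
        ⟨c0, c1, c2, c3⟩ | ⟨c0, c1, c2, c3⟩
    · exact absurd (funext fun i => by fin_cases i <;> simp [c0, c1, c2, c3]) h1
    · exact absurd (funext fun i => by fin_cases i <;> simp [c0, c1, c2, c3]) h2
    · exact absurd (funext fun i => by fin_cases i <;> simp [c0, c1, c2, c3]) h3
    · exact absurd (funext fun i => by fin_cases i <;> simp [c0, c1, c2, c3]) h4
    · exact funext fun i => by fin_cases i <;> simp [c0, c1, c2, c3]
  · -- reverse
    subst hx
    refine ⟨?_, ?_, ?_, ?_, ?_⟩ <;>
      try (intro h; have := congrFun h 0; simp at this)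
    have hmem : ∀ i : Fin 4, (![ic ![4, -1, -1, -1], ic ![0, 1, 0, 0], ic ![0, 0, 1, 0],
        ic ![0, 0, 0, 1]] : Fin 4 → (Fin 4 → ℝ)) i ∈
        ({ic ![4, -1, -1, -1], ic ![0, 1, 0, 0], ic ![0, 0, 1, 0],
          ic ![0, 0, 0, 1]} : Set (Fin 4 → ℝ)) := by
      intro i; fin_cases i <;> simp
    have := Finset.centerMass_mem_convexHull (Finset.univ : Finset (Fin 4))
      (w := fun _ => (1 / 4 : ℝ))
      (z := ![ic ![4, -1, -1, -1], ic ![0, 1, 0, 0], ic ![0, 0, 1, 0], ic ![0, 0, 0, 1]])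
      (fun i _ => by norm_num) (by simp [Fin.sum_univ_four])
      (fun i _ => hmem i)
    convert this using 1
    rw [Finset.centerMass]
    rw [hsnd]
    simp [Fin.sum_univ_four]
end
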